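/- arXiv:1410.1102 — 2 statements merged into one kernel-verified Lean document; each statement's English description precedes it below -/
import Mathlib

section
/- Identical regular tetrahedra cannot tile three-dimensional Euclidean space; equivalently, the dihedral angle of a regular tetrahedron, arccos(1/3), is not of the form 2π/n for any positive integer n. -/
open Real

lemma cos_two_pi_div_five' : Real.cos (2 * π / 5) = (√5 - 1) / 4 := by
  have h : 2 * π / 5 = 2 * (π / 5) := by ring
  rw [h, Real.cos_two_mul, Real.cos_pi_div_five]
  have h5 : (√5) ^ 2 = 5 := Real.sq_sqrt (by norm_num)
  nlinarith [h5]

lemma arccos_lt : Real.arccos (1/3) < 2 * π / 5 := by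
  have hπ := Real.pi_pos
  have h1 : Real.cos (2 * π / 5) < 1/3 := by
    rw [cos_two_pi_div_five']
    have : √5 < 7/3 := by
      have : (√5) ^ 2 = 5 := Real.sq_sqrt (by norm_num)
      nlinarith [Real.sqrt_nonneg 5]
    linarith
  by_contra h
  push_neg at h
  have h2 : Real.cos (2 * π / 5) ≥ Real.cos (Real.arccos (1/3)) := by
    rcases eq_or_lt_of_le h with heq | hlt
    · rw [heq]
    · exact le_of_lt (Real.strictAntiOn_cos ⟨by positivity, by linarith [Real.arccos_le_pi (1/3 : ℝ)]⟩
        ⟨Real.arccos_nonneg _, Real.arccos_le_pi _⟩ hlt)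
  rw [Real.cos_arccos (by norm_num) (by norm_num)] at h2
  linarith

lemma lt_arccos : π / 3 < Real.arccos (1/3) := by
  have hπ := Real.pi_pos
  by_contra h
  push_neg at h
  have h2 : Real.cos (π / 3) ≤ Real.cos (Real.arccos (1/3)) := by
    rcases eq_or_lt_of_le h with heq | hlt
    · rw [heq]
    · exact le_of_lt (Real.strictAntiOn_cos ⟨Real.arccos_nonneg _, Real.arccos_le_pi _⟩
        ⟨by positivity, by linarith⟩ hlt)
  rw [Real.cos_arccos (by norm_num) (by norm_num), Real.cos_pi_div_three] at h2
  linarith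

/-- The dihedral angle of a regular tetrahedron, `arccos (1/3)`, is not of the
form `2π/n` for any positive integer `n`; hence identical regular tetrahedra
cannot tile space face-to-face around a common edge. -/
theorem stmt_0 : ∀ n : ℕ, 0 < n → Real.arccos (1/3) ≠ 2 * Real.pi / n := by
  intro n hn heq
  have hπ := Real.pi_pos
  have h1 := arccos_lt
  have h2 := lt_arccos
  rcases le_or_gt n 5 with h | h
  · have hn' : (n : ℝ) ≤ 5 := by exact_mod_cast h
    have hn0 : (0 : ℝ) < n := by exact_mod_cast hn
    have : 2 * π / 5 ≤ 2 * π / n := by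
      apply div_le_div_of_nonneg_left (by positivity) hn0 hn'
    linarith
  · have hn' : (6 : ℝ) ≤ n := by exact_mod_cast h
    have : 2 * π / n ≤ 2 * π / 6 := by
      apply div_le_div_of_nonneg_left (by positivity) (by norm_num) hn'
    rw [heq] at h2
    linarith
end

section
/- For every ε > 0, any convex body D in ℝ³ contains a finite family of pairwise non-overlapping vertical circular cylinders (each of the form a disk times an interval, of possibly different sizes, all with vertical axis) whose total volume exceeds (1 - ε) times the volume of D. -/
open MeasureTheory Metric
open scoped NNReal ENNReal

abbrev E3 := EuclideanSpace ℝ (Fin 3)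

/-- A vertical circular cylinder in `ℝ³` with horizontal center `(a,b)`,
radius `r`, base height `c` and height `h`. -/
def verticalCylinder (a b c r h : ℝ) : Set (EuclideanSpace ℝ (Fin 3)) :=
  {p | (p 0 - a)^2 + (p 1 - b)^2 ≤ r^2 ∧ p 2 ∈ Set.Icc c (c + h)}

open Metric in
lemma verticalCylinder_isClosed (a b c r h : ℝ) : IsClosed (verticalCylinder a b c r h) := by
  have h0 : Continuous (fun p : EuclideanSpace ℝ (Fin 3) => p 0) := (EuclideanSpace.proj 0).continuous
  have h1 : Continuous (fun p : EuclideanSpace ℝ (Fin 3) => p 1) := (EuclideanSpace.proj 1).continuous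
  have h2 : Continuous (fun p : EuclideanSpace ℝ (Fin 3) => p 2) := (EuclideanSpace.proj 2).continuous
  have : verticalCylinder a b c r h =
      {p : EuclideanSpace ℝ (Fin 3) | (p 0 - a)^2 + (p 1 - b)^2 ≤ r^2} ∩
      ((fun p : EuclideanSpace ℝ (Fin 3) => p 2) ⁻¹' Set.Icc c (c + h)) := rfl
  rw [this]
  exact (isClosed_le (by fun_prop) continuous_const).inter (isClosed_Icc.preimage h2)

open Metric in
lemma dist_sq_eq (p q : EuclideanSpace ℝ (Fin 3)) :
    dist p q ^ 2 = (p 0 - q 0)^2 + (p 1 - q 1)^2 + (p 2 - q 2)^2 := by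
  rw [EuclideanSpace.dist_eq]
  rw [Real.sq_sqrt (by positivity)]
  simp [Fin.sum_univ_three, Real.dist_eq, sq_abs]

open Metric in
lemma cyl_subset_closedBall (x : EuclideanSpace ℝ (Fin 3)) {r : ℝ} (hr : 0 < r) :
    verticalCylinder (x 0) (x 1) (x 2 - r) r (2 * r) ⊆ closedBall x (2 * r) := by
  intro p hp
  obtain ⟨h1, h2, h3⟩ := hp
  have hz : (p 2 - x 2)^2 ≤ r^2 := by
    have : x 2 - r + 2 * r = x 2 + r := by ring
    rw [this] at h3
    nlinarith
  have hd : dist p x ^ 2 ≤ (2 * r)^2 := by rw [dist_sq_eq]; nlinarith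
  rw [mem_closedBall]
  nlinarith [dist_nonneg (x := p) (y := x)]

open Metric in
lemma closedBall_subset_cyl (x : EuclideanSpace ℝ (Fin 3)) {r : ℝ} (hr : 0 < r) :
    closedBall x r ⊆ verticalCylinder (x 0) (x 1) (x 2 - r) r (2 * r) := by
  intro p hp
  rw [mem_closedBall] at hp
  have hd : dist p x ^ 2 ≤ r ^ 2 := by nlinarith [dist_nonneg (x := p) (y := x)]
  rw [dist_sq_eq] at hd
  have e0 : (p 0 - x 0)^2 ≥ 0 := sq_nonneg _
  have e1 : (p 1 - x 1)^2 ≥ 0 := sq_nonneg _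
  have e2 : (p 2 - x 2)^2 ≥ 0 := sq_nonneg _
  refine ⟨by nlinarith, ?_, ?_⟩
  · simp only [Set.mem_Icc]; nlinarith
  · have : x 2 - r + 2 * r = x 2 + r := by ring
    rw [this]; nlinarith

/-- Any convex body in `ℝ³` admits, for every `ε > 0`, a finite family of
non-overlapping vertical circular cylinders inside it whose total volume
exceeds `1 - ε` times its volume. -/
theorem stmt_13 (D : Set (EuclideanSpace ℝ (Fin 3)))
    (hD : IsCompact D) (hconv : Convex ℝ D) (hint : (interior D).Nonempty)
    (ε : ℝ) (hε : 0 < ε) :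
    ∃ (n : ℕ) (a b c r h : Fin n → ℝ),
      (∀ i, 0 < r i) ∧ (∀ i, 0 < h i) ∧
      (∀ i, verticalCylinder (a i) (b i) (c i) (r i) (h i) ⊆ D) ∧
      (∀ i j, i ≠ j →
        Disjoint (interior (verticalCylinder (a i) (b i) (c i) (r i) (h i)))
          (interior (verticalCylinder (a j) (b j) (c j) (r j) (h j)))) ∧
      (1 - ε) * (volume D).toReal <
        ∑ i, (volume (verticalCylinder (a i) (b i) (c i) (r i) (h i))).toReal := by
  classical
  set μ : Measure E3 := volume with hμ
  set B : E3 × ℝ → Set E3 :=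
    fun q => verticalCylinder (q.1 0) (q.1 1) (q.1 2 - q.2) q.2 (2 * q.2) with hBdef
  set t : Set (E3 × ℝ) := {q | 0 < q.2 ∧ B q ⊆ D} with htdef
  -- Vitali hypotheses
  have hB : ∀ q ∈ t, B q ⊆ closedBall q.1 (2 * q.2) :=
    fun q hq => cyl_subset_closedBall q.1 hq.1
  have hB' : ∀ q ∈ t, closedBall q.1 q.2 ⊆ B q :=
    fun q hq => closedBall_subset_cyl q.1 hq.1
  have hball : ∀ (x : E3) (r : ℝ), 0 ≤ r →
      μ (closedBall x r) = ENNReal.ofReal (r ^ 3) * μ (ball (0 : E3) 1) := by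
    intro x r hr
    rw [hμ, Measure.addHaar_closedBall volume x hr, finrank_euclideanSpace, Fintype.card_fin]
  have μB : ∀ q ∈ t, μ (closedBall q.1 (3 * (2 * q.2))) ≤ (216 : ℝ≥0) * μ (B q) := by
    intro q hq
    have hr : 0 < q.2 := hq.1
    have h1 : μ (closedBall q.1 (3 * (2 * q.2))) = ENNReal.ofReal ((3 * (2 * q.2)) ^ 3) *
        μ (ball (0 : E3) 1) := hball _ _ (by positivity)
    have h2 : μ (closedBall q.1 q.2) = ENNReal.ofReal (q.2 ^ 3) * μ (ball (0 : E3) 1) :=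
      hball _ _ hr.le
    have h3 : ENNReal.ofReal ((3 * (2 * q.2)) ^ 3) = (216 : ℝ≥0) * ENNReal.ofReal (q.2 ^ 3) := by
      have : (3 * (2 * q.2)) ^ 3 = 216 * q.2 ^ 3 := by ring
      rw [this, ENNReal.ofReal_mul (by norm_num)]
      norm_num
    calc μ (closedBall q.1 (3 * (2 * q.2)))
        = (216 : ℝ≥0) * μ (closedBall q.1 q.2) := by rw [h1, h2, h3, mul_assoc]
      _ ≤ (216 : ℝ≥0) * μ (B q) := mul_le_mul_right (measure_mono (hB' q hq)) _
  have ht : ∀ q ∈ t, (interior (B q)).Nonempty := by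
    intro q hq
    have h1 : ball q.1 q.2 ⊆ interior (B q) :=
      interior_maximal ((ball_subset_closedBall).trans (hB' q hq)) isOpen_ball
    exact (nonempty_ball.2 hq.1).mono h1
  have h't : ∀ q ∈ t, IsClosed (B q) := fun q _ => verticalCylinder_isClosed _ _ _ _ _
  have hf : ∀ x ∈ interior D, ∀ δ > (0 : ℝ), ∃ q ∈ t, 2 * q.2 ≤ δ ∧ q.1 = x := by
    intro x hx δ hδ
    obtain ⟨ρ, hρ, hρsub⟩ := Metric.isOpen_iff.1 isOpen_interior x hx
    refine ⟨(x, min (δ / 2) (ρ / 4)), ⟨by positivity, ?_⟩, ?_, rfl⟩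
    · refine (cyl_subset_closedBall x (by positivity)).trans ?_
      refine (closedBall_subset_ball ?_).trans (hρsub.trans interior_subset)
      have : min (δ / 2) (ρ / 4) ≤ ρ / 4 := min_le_right _ _
      nlinarith
    · have : min (δ / 2) (ρ / 4) ≤ δ / 2 := min_le_left _ _
      simp only []
      nlinarith
  obtain ⟨u, hut, hu_count, hu_disj, hcov⟩ :=
    Vitali.exists_disjoint_covering_ae μ (interior D) t 216
      (fun q => 2 * q.2) (fun q => q.1) B hB μB ht h't hf
  -- measure facts
  have hmeas : ∀ q ∈ u, MeasurableSet (B q) := fun q hq => (h't q (hut hq)).measurableSet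
  have hDfin : μ D ≠ ⊤ := hD.measure_lt_top.ne
  have hfr : μ (frontier D) = 0 := hconv.addHaar_frontier μ
  have hDeq : μ D = μ (interior D) := by
    refine le_antisymm ?_ (measure_mono interior_subset)
    calc μ D ≤ μ (closure D) := measure_mono subset_closure
      _ = μ (interior D ∪ frontier D) := by rw [closure_eq_interior_union_frontier]
      _ ≤ μ (interior D) + μ (frontier D) := measure_union_le _ _
      _ = μ (interior D) := by rw [hfr, add_zero]
  have hunion : μ (⋃ q ∈ u, B q) = ∑' q : u, μ (B q) :=
    measure_biUnion hu_count hu_disj hmeas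
  have hge : μ D ≤ ∑' q : u, μ (B q) := by
    rw [← hunion]
    calc μ D = μ (interior D) := hDeq
      _ ≤ μ (interior D \ ⋃ q ∈ u, B q) + μ (⋃ q ∈ u, B q) := by
          refine (measure_mono ?_).trans (measure_union_le _ _)
          intro p hp
          by_cases hpu : p ∈ ⋃ q ∈ u, B q
          · exact Or.inr hpu
          · exact Or.inl ⟨hp, hpu⟩
      _ = μ (⋃ q ∈ u, B q) := by rw [hcov, zero_add]
  have hDpos : 0 < μ D :=
    lt_of_lt_of_le (isOpen_interior.measure_pos μ hint) (measure_mono interior_subset)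
  set x : ℝ := (μ D).toReal with hx
  have hxpos : 0 < x := ENNReal.toReal_pos hDpos.ne' hDfin
  set δ' : ℝ := min ε 2⁻¹ with hδ'
  have hδ'pos : 0 < δ' := lt_min hε (by norm_num)
  have hδ'le : δ' ≤ ε := min_le_left _ _
  have hδ'half : δ' ≤ 2⁻¹ := min_le_right _ _
  have htarget : ENNReal.ofReal ((1 - δ') * x) < ∑' q : u, μ (B q) := by
    refine lt_of_lt_of_le ?_ hge
    conv_rhs => rw [← ENNReal.ofReal_toReal hDfin]
    rw [ENNReal.ofReal_lt_ofReal_iff hxpos]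
    nlinarith
  rw [ENNReal.tsum_eq_iSup_sum] at htarget
  obtain ⟨s, hs⟩ := lt_iSup_iff.1 htarget
  -- index the finite family
  set n := s.card with hn
  set e := s.equivFin with he
  set g : Fin n → E3 × ℝ := fun i => ((e.symm i : u) : E3 × ℝ) with hg
  have hgu : ∀ i, g i ∈ u := fun i => (e.symm i : u).2
  have hgt : ∀ i, g i ∈ t := fun i => hut (hgu i)
  have hginj : Function.Injective g := by
    intro i j hij
    apply e.symm.injective
    exact Subtype.ext (Subtype.ext hij)
  refine ⟨n, fun i => (g i).1 0, fun i => (g i).1 1, fun i => (g i).1 2 - (g i).2,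
    fun i => (g i).2, fun i => 2 * (g i).2, fun i => (hgt i).1,
    fun i => by have := (hgt i).1; positivity, fun i => (hgt i).2, ?_, ?_⟩
  · intro i j hij
    have hd : Disjoint (B (g i)) (B (g j)) :=
      hu_disj (hgu i) (hgu j) (fun hc => hij (hginj hc))
    exact hd.mono interior_subset interior_subset
  · -- sum bound
    have hfin : ∀ q : u, μ (B q) ≠ ⊤ := by
      intro q
      exact (lt_of_le_of_lt (measure_mono (hut q.2).2) hD.measure_lt_top).ne
    have hsum_eq : ∑ q ∈ s, μ (B (q : E3 × ℝ)) = ∑ i : Fin n, μ (B (g i)) := by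
      rw [← Finset.sum_attach s (fun q => μ (B (q : E3 × ℝ)))]
      exact Fintype.sum_equiv e _ _ (fun q => by simp [hg])
    have hs' : ENNReal.ofReal ((1 - δ') * x) < ∑ i : Fin n, μ (B (g i)) := by
      rw [← hsum_eq]; exact hs
    have hterm : ∀ i : Fin n, μ (B (g i)) ≠ ⊤ :=
      fun i => (lt_of_le_of_lt (measure_mono (hgt i).2) hD.measure_lt_top).ne
    have hsumfin : ∑ i : Fin n, μ (B (g i)) ≠ ⊤ :=
      ENNReal.sum_ne_top.2 fun i _ => hterm i
    have final : (1 - ε) * x < ∑ i : Fin n, (μ (B (g i))).toReal := by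
      calc (1 - ε) * x ≤ (1 - δ') * x := by nlinarith
        _ = (ENNReal.ofReal ((1 - δ') * x)).toReal := by
            rw [ENNReal.toReal_ofReal (by nlinarith)]
        _ < (∑ i : Fin n, μ (B (g i))).toReal := ENNReal.toReal_strict_mono hsumfin hs'
        _ = ∑ i : Fin n, (μ (B (g i))).toReal := ENNReal.toReal_sum (fun i _ => hterm i)
    exact final
end
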